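/- Let p be a finite binary sequence in which every suffix contains at least as many 0s as 1s (equivalently, reading p from the right, the partial count of 0s is always ≥ the partial count of 1s). Then iterated 10-elimination terminates with a word containing no letter 1: there exists k such that E^k(p) contains no 1. Moreover the total number of 10-pairs eliminated over all steps, Σ_k e_k, equals the number of 1s in p. -/
import Mathlib

def elim : List Bool → List Bool
  | [] => []
  | true :: false :: rest => elim rest
  | a :: rest => a :: elim rest

def pairCount (p : List Bool) : ℕ :=
  ((p.zip p.tail).filter (fun x => x.1 && !x.2)).length

private lemma elim_nil : elim [] = [] := rfl
private lemma elim_tf (r : List Bool) : elim (true :: false :: r) = elim r := rfl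
private lemma elim_f (r : List Bool) : elim (false :: r) = false :: elim r := by
  cases r with
  | nil => rfl
  | cons b l => cases b <;> rfl
private lemma elim_tt (r : List Bool) : elim (true :: true :: r) = true :: elim (true :: r) := rfl
private lemma elim_t : elim [true] = [true] := rfl

private lemma pc_nil : pairCount [] = 0 := rfl
private lemma pc_single (a : Bool) : pairCount [a] = 0 := rfl
private lemma pc_cons (a b : Bool) (l : List Bool) :
    pairCount (a::b::l) = (if a && !b then 1 else 0) + pairCount (b::l) := by
  cases a <;> cases b <;> simp [pairCount, List.zip, List.filter, Nat.add_comm]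

private lemma pc_f (r : List Bool) : pairCount (false :: r) = pairCount r := by
  cases r with
  | nil => rfl
  | cons b l => rw [pc_cons]; simp

private lemma countE (c : Bool) : ∀ p : List Bool,
    p.count c = pairCount p + (elim p).count c
  | [] => by simp [elim_nil, pc_nil]
  | [a] => by simp [pc_single]; cases a <;> rfl
  | true :: false :: r => by
      have := countE c r
      rw [elim_tf, pc_cons, pc_f]
      cases c <;> simp [List.count_cons] at * <;> omega
  | false :: b :: r => by
      have := countE c (b :: r)
      rw [elim_f, pc_cons]
      cases c <;> simp [List.count_cons] at * <;> omega
  | true :: true :: r => by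
      have := countE c (true :: r)
      rw [elim_tt, pc_cons]
      cases c <;> simp [List.count_cons] at * <;> omega
  termination_by p => p.length

private def Y (p : List Bool) : Prop :=
  ∀ i, (p.drop i).count true ≤ (p.drop i).count false

private lemma Y_tail {a : Bool} {l : List Bool} (h : Y (a :: l)) : Y l :=
  fun i => h (i + 1)

private lemma Y_elim : ∀ p : List Bool, Y p → Y (elim p)
  | [], _ => by intro i; simp [elim_nil]
  | [a], h => by
      cases a
      · intro i; cases i <;> simp [elim_f, elim_nil, List.drop]
      · exact absurd (h 0) (by simp)
  | true :: false :: r, h => by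
      rw [elim_tf]; exact Y_elim r (Y_tail (Y_tail h))
  | false :: b :: r, h => by
      rw [elim_f]
      intro i
      cases i with
      | zero =>
          have h1 := h 1
          have ht := countE true (b :: r)
          have hf := countE false (b :: r)
          have := Y_elim (b :: r) (Y_tail h) 0
          simp only [List.drop] at h1 this ⊢
          simp [List.count_cons] at *
          omega
      | succ n => exact Y_elim (b :: r) (Y_tail h) n
  | true :: true :: r, h => by
      rw [elim_tt]
      intro i
      cases i with
      | zero =>
          have h0 := h 0
          have ht := countE true (true :: r)
          have hf := countE false (true :: r)
          simp only [List.drop] at h0 ⊢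
          simp [List.count_cons] at *
          omega
      | succ n => exact Y_elim (true :: r) (Y_tail h) n
  termination_by p => p.length

private lemma pc_pos : ∀ p : List Bool, Y p → 0 < p.count true → 0 < pairCount p
  | [], _, hc => by simp at hc
  | [a], h, hc => by
      cases a
      · simp at hc
      · exact absurd (h 0) (by simp)
  | true :: false :: r, _, _ => by rw [pc_cons]; simp
  | false :: b :: r, h, hc => by
      rw [pc_cons]
      have : 0 < (b :: r).count true := by simpa [List.count_cons] using hc
      have := pc_pos (b :: r) (Y_tail h) this
      omega
  | true :: true :: r, h, _ => by
      rw [pc_cons]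
      have : 0 < (true :: r).count true := by simp [List.count_cons]
      have := pc_pos (true :: r) (Y_tail h) this
      simpa using this
  termination_by p => p.length

private lemma main_aux : ∀ n : ℕ, ∀ p : List Bool, p.count true = n → Y p →
    ∃ k : ℕ, (elim^[k] p).count true = 0 ∧
      ∑ j ∈ Finset.range k, pairCount (elim^[j] p) = p.count true := by
  intro n
  induction n using Nat.strong_induction_on with
  | _ n ih =>
    intro p hn hY
    rcases Nat.eq_zero_or_pos (p.count true) with h0 | h0
    · exact ⟨0, by simpa using h0, by simp [h0]⟩
    · have hpc := pc_pos p hY h0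
      have hA := countE true p
      have hm : (elim p).count true < n := by omega
      obtain ⟨k, hk1, hk2⟩ := ih _ hm (elim p) rfl (Y_elim p hY)
      refine ⟨k + 1, ?_, ?_⟩
      · rwa [Function.iterate_succ_apply]
      · rw [Finset.sum_range_succ']
        simp only [Function.iterate_succ_apply, Function.iterate_zero_apply]
        omega

theorem stmt3 (p : List Bool)
    (h : ∀ i, (p.drop i).count true ≤ (p.drop i).count false) :
    ∃ k : ℕ, (elim^[k] p).count true = 0 ∧
      ∑ j ∈ Finset.range k, pairCount (elim^[j] p) = p.count true := by
  exact main_aux _ p rfl h
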